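/- arXiv:1008.3626 — 5 statements merged into one kernel-verified Lean document; each statement's English description precedes it below -/
import Mathlib

section
/- If |k| ≤ tan β − σ with 0 < σ < tan β and β ∈ (0, π/2), then for any θ ∈ [−θ₀, θ₀] with θ₀ = π/2 − β, we have σ·cos β ≤ (1 ± k·tan θ)·cos θ ≤ 2 − σ·cot β. -/
/-! On `|θ| ≤ π/2 - β` one has `cos θ ≥ sin β` and `|sin θ| ≤ cos β`. Since
`(1 ± k tan θ) cos θ = cos θ ± k sin θ` and `|k sin θ| ≤ (tan β - σ) cos β = sin β - σ cos β`,
the expression lies between `σ cos β` and `1 + sin β - σ cos β`, and the last quantity is at most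
`2 - σ cot β` because their difference is `(1 - sin β)(1 - σ cot β) ≥ 0`. -/

open Real

namespace Real

lemma sin_le_cos_of_abs_le {β θ : ℝ} (hβ : -(π / 2) ≤ β) (hθ : |θ| ≤ π / 2 - β) :
    sin β ≤ cos θ := by
  rw [← cos_abs θ, ← cos_pi_div_two_sub]
  exact cos_le_cos_of_nonneg_of_le_pi (abs_nonneg θ) (by linarith) hθ

lemma abs_sin_le_cos_of_abs_le {β θ : ℝ} (hβ : 0 ≤ β) (hθ : |θ| ≤ π / 2 - β) :
    |sin θ| ≤ cos β := by
  have hβ' : β ≤ π / 2 := by linarith [abs_nonneg θ]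
  have hsin : 0 ≤ sin β := sin_nonneg_of_nonneg_of_le_pi hβ (by linarith [pi_pos])
  have hcos : sin β ≤ cos θ := sin_le_cos_of_abs_le (by linarith [pi_pos]) hθ
  refine abs_le_of_sq_le_sq ?_ (cos_nonneg_of_mem_Icc ⟨by linarith, hβ'⟩)
  nlinarith [sin_sq_add_cos_sq θ, sin_sq_add_cos_sq β]

lemma one_add_mul_tan_mul_cos {θ : ℝ} (k : ℝ) (hθ : cos θ ≠ 0) :
    (1 + k * tan θ) * cos θ = cos θ + k * sin θ := by
  rw [add_mul, one_mul, mul_assoc, tan_mul_cos hθ]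

lemma sin_sub_mul_cos_le_one_sub_mul_cot {β σ : ℝ} (hβ : 0 < sin β) (hσ : σ * cos β ≤ sin β) :
    sin β - σ * cos β ≤ 1 - σ * (cos β / sin β) := by
  have hcot : σ * (cos β / sin β) ≤ 1 := by
    rw [← mul_div_assoc, div_le_one hβ]
    exact hσ
  have hfactor : (1 - σ * (cos β / sin β)) - (sin β - σ * cos β) =
      (1 - sin β) * (1 - σ * (cos β / sin β)) := by
    field_simp
  nlinarith [mul_nonneg (sub_nonneg.2 (sin_le_one β)) (sub_nonneg.2 hcot)]

lemma mul_cos_le_one_add_mul_tan_mul_cos_le {β σ k θ : ℝ} (hβ : β ∈ Set.Ioo 0 (π / 2))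
    (hk : |k| ≤ tan β - σ) (hθ : |θ| ≤ π / 2 - β) :
    σ * cos β ≤ (1 + k * tan θ) * cos θ ∧
      (1 + k * tan θ) * cos θ ≤ 2 - σ * (cos β / sin β) := by
  obtain ⟨hβ0, hβ2⟩ := hβ
  have hcβ : 0 < cos β := cos_pos_of_mem_Ioo ⟨by linarith, hβ2⟩
  have hsβ : 0 < sin β := sin_pos_of_pos_of_lt_pi hβ0 (by linarith)
  have hcθ : sin β ≤ cos θ := sin_le_cos_of_abs_le (by linarith) hθ
  have hksin : |k * sin θ| ≤ sin β - σ * cos β :=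
    calc |k * sin θ| = |k| * |sin θ| := abs_mul k (sin θ)
      _ ≤ (tan β - σ) * cos β :=
        mul_le_mul hk (abs_sin_le_cos_of_abs_le hβ0.le hθ) (abs_nonneg _)
          ((abs_nonneg k).trans hk)
      _ = sin β - σ * cos β := by rw [sub_mul, tan_mul_cos hcβ.ne']
  have hupper := sin_sub_mul_cos_le_one_sub_mul_cot (σ := σ) hsβ
    (by linarith [abs_nonneg (k * sin θ)])
  rw [one_add_mul_tan_mul_cos k (hsβ.trans_le hcθ).ne']
  obtain ⟨hlo, hhi⟩ := abs_le.mp hksin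
  constructor <;> linarith [cos_le_one θ]

end Real

theorem stmt_4_general (β σ k θ : ℝ)
    (hβ : β ∈ Set.Ioo 0 (π / 2))
    (hk : |k| ≤ tan β - σ)
    (hθ : θ ∈ Set.Icc (-(π / 2 - β)) (π / 2 - β)) :
    (σ * cos β ≤ (1 + k * tan θ) * cos θ ∧ (1 + k * tan θ) * cos θ ≤ 2 - σ * (cos β / sin β)) ∧
    (σ * cos β ≤ (1 - k * tan θ) * cos θ ∧ (1 - k * tan θ) * cos θ ≤ 2 - σ * (cos β / sin β)) := by
  have hθ' : |θ| ≤ π / 2 - β := abs_le.mpr hθ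
  have hk' : |-k| ≤ tan β - σ := by rwa [abs_neg]
  refine ⟨mul_cos_le_one_add_mul_tan_mul_cos_le hβ hk hθ', ?_⟩
  simpa only [neg_mul, ← sub_eq_add_neg] using mul_cos_le_one_add_mul_tan_mul_cos_le hβ hk' hθ'

theorem stmt_4 (β σ k θ : ℝ)
    (hβ : β ∈ Set.Ioo 0 (π / 2)) (hσ : σ ∈ Set.Ioo 0 (tan β))
    (hk : |k| ≤ tan β - σ)
    (hθ : θ ∈ Set.Icc (-(π / 2 - β)) (π / 2 - β)) :
    (σ * cos β ≤ (1 + k * tan θ) * cos θ ∧ (1 + k * tan θ) * cos θ ≤ 2 - σ * (cos β / sin β)) ∧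
    (σ * cos β ≤ (1 - k * tan θ) * cos θ ∧ (1 - k * tan θ) * cos θ ≤ 2 - σ * (cos β / sin β)) :=
  stmt_4_general β σ k θ hβ hk hθ
end

section
/- Let β ∈ (0, π/2), σ ∈ (0, tan β), θ₀ = π/2 − β. Suppose ω' ∈ ℝ and θ ∈ [−θ₀, θ₀] satisfy cos θ + ω'·sin θ > 0 and −(tan β − σ) ≤ (ω'·cos θ − sin θ)/(cos θ + ω'·sin θ) ≤ tan β − σ. Then |ω'| ≤ (1 + tan β − σ)/(σ·cos β). -/
open Real

/-!
Clearing the positive denominator, the upper slope bound reads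
`ω' (cos θ - T sin θ) ≤ T cos θ + sin θ ≤ 1 + T` with `T = tan β - σ`, and the lower one is the same
inequality for `(-ω', -θ)`. So it suffices that `cos t - T sin t ≥ σ cos β` for `|t| ≤ π/2 - β`:
this function decreases on `[0, π/2]`, and at `t = π/2 - β` it equals `sin β - T cos β = σ cos β`.
-/

lemma antitoneOn_cos_sub_mul_sin {T : ℝ} (hT : 0 ≤ T) :
    AntitoneOn (fun t => cos t - T * sin t) (Set.Icc 0 (π / 2)) := by
  intro s hs t ht hst
  have hcos : cos t ≤ cos s := cos_le_cos_of_nonneg_of_le_pi hs.1 (by linarith [ht.2, pi_pos]) hst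
  have hsin : sin s ≤ sin t := sin_le_sin_of_le_of_le_pi_div_two (by linarith [hs.1, pi_pos]) ht.2 hst
  dsimp only
  nlinarith

lemma cos_sub_mul_sin_le_of_abs_le {T a t : ℝ} (hT : 0 ≤ T) (ha : a ≤ π / 2) (ht : |t| ≤ a) :
    cos a - T * sin a ≤ cos t - T * sin t := by
  have hmem : |t| ∈ Set.Icc 0 (π / 2) := ⟨abs_nonneg t, ht.trans ha⟩
  have hle : cos a - T * sin a ≤ cos |t| - T * sin |t| :=
    antitoneOn_cos_sub_mul_sin hT hmem ⟨hmem.1.trans ht, ha⟩ ht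
  rcases le_or_gt 0 t with h | h
  · rwa [abs_of_nonneg h] at hle
  · rw [abs_of_neg h] at hle hmem
    rw [cos_neg, sin_neg] at hle
    have hsin : sin t ≤ 0 := sin_nonpos_of_nonpos_of_neg_pi_le h.le (by linarith [hmem.2, pi_pos])
    nlinarith

lemma cos_pi_div_two_sub_sub_mul_sin {β σ : ℝ} (hβ : cos β ≠ 0) :
    cos (π / 2 - β) - (tan β - σ) * sin (π / 2 - β) = σ * cos β := by
  rw [cos_pi_div_two_sub, sin_pi_div_two_sub, tan_eq_sin_div_cos]
  field_simp
  ring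

lemma mul_le_one_add_of_sub_le_mul_add {ω c s T D : ℝ} (hω : 0 ≤ ω) (hc : c ≤ 1) (hs : s ≤ 1)
    (hT : 0 ≤ T) (hD : D ≤ c - T * s) (h : ω * c - s ≤ T * (c + ω * s)) :
    ω * D ≤ 1 + T := by
  nlinarith [mul_le_mul_of_nonneg_left hD hω]

theorem stmt_6 (β σ ω' θ : ℝ)
    (hβ : β ∈ Set.Ioo 0 (π / 2)) (hσ : σ ∈ Set.Ioo 0 (tan β))
    (hθ : θ ∈ Set.Icc (-(π / 2 - β)) (π / 2 - β))
    (hpos : 0 < cos θ + ω' * sin θ)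
    (hlo : -(tan β - σ) ≤ (ω' * cos θ - sin θ) / (cos θ + ω' * sin θ))
    (hhi : (ω' * cos θ - sin θ) / (cos θ + ω' * sin θ) ≤ tan β - σ) :
    |ω'| ≤ (1 + tan β - σ) / (σ * cos β) := by
  have hcos : 0 < cos β := cos_pos_of_mem_Ioo ⟨by linarith [hβ.1, pi_pos], hβ.2⟩
  have hT : 0 ≤ tan β - σ := by linarith [hσ.2]
  have hbound : ∀ t, |t| ≤ π / 2 - β → σ * cos β ≤ cos t - (tan β - σ) * sin t := fun t ht =>
    cos_pi_div_two_sub_sub_mul_sin (β := β) hcos.ne' ▸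
      cos_sub_mul_sin_le_of_abs_le hT (by linarith [hβ.1]) ht
  have habs : |θ| ≤ π / 2 - β := abs_le.2 hθ
  rw [le_div_iff₀ (mul_pos hσ.1 hcos)]
  rcases le_or_gt 0 ω' with hω | hω
  · rw [abs_of_nonneg hω]
    exact mul_le_one_add_of_sub_le_mul_add hω (cos_le_one θ) (sin_le_one θ) hT
      (hbound θ habs) ((div_le_iff₀ hpos).1 hhi) |>.trans_eq (by ring)
  · rw [abs_of_neg hω]
    have hslope : -ω' * cos θ - -sin θ ≤ (tan β - σ) * (cos θ + -ω' * -sin θ) := by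
      linarith [(le_div_iff₀ hpos).1 hlo]
    have hneg := hbound (-θ) (by rwa [abs_neg])
    rw [cos_neg, sin_neg] at hneg
    exact mul_le_one_add_of_sub_le_mul_add (neg_nonneg.2 hω.le) (cos_le_one θ)
      (by linarith [neg_one_le_sin θ]) hT hneg hslope |>.trans_eq (by ring)
end

section
/- Let β ∈ (0, π/2), σ ∈ (0, tan β), θ₀ = π/2 − β. Suppose ω' ∈ ℝ and θ ∈ [−θ₀, θ₀] satisfy cos θ + ω'·sin θ > 0 and |(ω'·cos θ − sin θ)/(cos θ + ω'·sin θ)| ≤ tan β − σ. Then cos θ + ω'·sin θ ≥ 1/(2 − σ·cot β). -/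
/-!
Write `J = cos θ + ω' sin θ` and `N = ω' cos θ - sin θ`; then `J cos θ - N sin θ = 1`.
The slope bound gives `|N| ≤ (tan β - σ) J` and `|θ| ≤ π/2 - β` gives `|sin θ| ≤ cos β`, so
`1 ≤ J (1 + sin β - σ cos β)`. Finally `1 + sin β - σ cos β ≤ 2 - σ cot β`, which is
`(1 - sin β)(1 - σ cot β) ≥ 0`.
-/

open Real

lemma jacobian_mul_cos_sub_mul_sin (w θ : ℝ) :
    (cos θ + w * sin θ) * cos θ - (w * cos θ - sin θ) * sin θ = 1 := by
  linear_combination cos_sq_add_sin_sq θ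

lemma abs_sin_le_cos_of_mem_Icc {β θ : ℝ} (hβ : 0 ≤ β)
    (hθ : θ ∈ Set.Icc (-(π / 2 - β)) (π / 2 - β)) : |sin θ| ≤ cos β := by
  obtain ⟨hθ₁, hθ₂⟩ := hθ
  rw [← sin_pi_div_two_sub, abs_le]
  constructor
  · rw [neg_le, ← sin_neg]
    exact sin_le_sin_of_le_of_le_pi_div_two (by linarith) (by linarith) (by linarith)
  · exact sin_le_sin_of_le_of_le_pi_div_two (by linarith) (by linarith) hθ₂

lemma one_le_jacobian_mul {w θ a k : ℝ} (hJ : 0 < cos θ + w * sin θ)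
    (hsin : |sin θ| ≤ a) (hslope : |w * cos θ - sin θ| ≤ k * (cos θ + w * sin θ)) :
    1 ≤ (cos θ + w * sin θ) * (1 + k * a) := by
  set J := cos θ + w * sin θ
  have hJcos : J * cos θ ≤ J := mul_le_of_le_one_right hJ.le (cos_le_one θ)
  have hNsin : -((w * cos θ - sin θ) * sin θ) ≤ k * J * a := by
    calc -((w * cos θ - sin θ) * sin θ) ≤ |w * cos θ - sin θ| * |sin θ| := by
          rw [← abs_mul]; exact neg_le_abs _
      _ ≤ k * J * a :=
          mul_le_mul hslope hsin (abs_nonneg _) ((abs_nonneg _).trans hslope)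
  linarith [jacobian_mul_cos_sub_mul_sin w θ]

lemma mul_cos_div_sin_lt_one {β σ : ℝ} (hβ : β ∈ Set.Ioo 0 (π / 2)) (hσ : σ < tan β) :
    σ * (cos β / sin β) < 1 := by
  have hsin : 0 < sin β := sin_pos_of_pos_of_lt_pi hβ.1 (by linarith [hβ.2, pi_pos])
  have hcos : 0 < cos β := cos_pos_of_mem_Ioo ⟨by linarith [hβ.1, pi_pos], hβ.2⟩
  rw [tan_eq_sin_div_cos, lt_div_iff₀ hcos] at hσ
  rw [← mul_div_assoc, div_lt_one hsin]
  exact hσ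

lemma one_add_tan_sub_mul_cos_le {β σ : ℝ} (hβ : β ∈ Set.Ioo 0 (π / 2)) (hσ : σ < tan β) :
    1 + (tan β - σ) * cos β ≤ 2 - σ * (cos β / sin β) := by
  have hsin : 0 < sin β := sin_pos_of_pos_of_lt_pi hβ.1 (by linarith [hβ.2, pi_pos])
  have hcos : 0 < cos β := cos_pos_of_mem_Ioo ⟨by linarith [hβ.1, pi_pos], hβ.2⟩
  have hfactor : 0 ≤ (1 - sin β) * (1 - σ * (cos β / sin β)) :=
    mul_nonneg (sub_nonneg.2 (sin_le_one β)) (sub_nonneg.2 (mul_cos_div_sin_lt_one hβ hσ).le)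
  have htan : tan β * cos β = sin β := by rw [tan_eq_sin_div_cos, div_mul_cancel₀ _ hcos.ne']
  have hcot : σ * (cos β / sin β) * sin β = σ * cos β := by field_simp
  linear_combination hfactor + htan + hcot

theorem stmt_7 (β σ ω' θ : ℝ)
    (hβ : β ∈ Set.Ioo 0 (π / 2)) (hσ : σ ∈ Set.Ioo 0 (tan β))
    (hθ : θ ∈ Set.Icc (-(π / 2 - β)) (π / 2 - β))
    (hpos : 0 < cos θ + ω' * sin θ)
    (hslope : |(ω' * cos θ - sin θ) / (cos θ + ω' * sin θ)| ≤ tan β - σ) :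
    1 / (2 - σ * (cos β / sin β)) ≤ cos θ + ω' * sin θ := by
  rw [abs_div, abs_of_pos hpos, div_le_iff₀ hpos] at hslope
  have hJ := one_le_jacobian_mul hpos (abs_sin_le_cos_of_mem_Icc hβ.1.le hθ) hslope
  have hD : 0 < 2 - σ * (cos β / sin β) := by linarith [mul_cos_div_sin_lt_one hβ hσ.2]
  rw [div_le_iff₀ hD]
  exact hJ.trans (mul_le_mul_of_nonneg_left (one_add_tan_sub_mul_cos_le hβ hσ.2) hpos.le)
end

section
/- Fix t > 0 and let D(t) = ∫_{−ζ₁(t)}^{ζ₂(t)} √(2(T−t))·ψ(x/√(2(T−t))) dx − (1/2)(ζ₁(t)² + ζ₂(t)²) tan β, where ζᵢ(t) = qᵢ√(2(T−t)) and ψ solves a(ψ')ψ'' = zψ' − ψ on [−q₁, q₂] with ψ'(−q₁) = −γ₁, ψ(−q₁) = q₁ tan β, ψ'(q₂) = γ₂, ψ(q₂) = q₂ tan β. Then D'(t) = ∫_{−γ₁}^{γ₂} a(p) dp. -/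
/-!
Substituting `x = √(2(T - t)) z` shows `D t = 2 (T - t) C` for `t < T`, where
`C = ∫_{-q₁}^{q₂} ψ - (q₁² + q₂²) tan β / 2`, so `D' = -2C`. On the other hand, the change of
variables `p = ψ'(z)` and the profile equation give
`∫_{-γ₁}^{γ₂} a = ∫_{-q₁}^{q₂} (z ψ' - ψ) = [z ψ]_{-q₁}^{q₂} - 2 ∫_{-q₁}^{q₂} ψ`,
which the boundary values `ψ(-q₁) = q₁ tan β`, `ψ(q₂) = q₂ tan β` turn into `-2C`.
-/

open Real Set Filter

theorem intervalIntegral.integral_const_mul_comp_div {f : ℝ → ℝ} {s : ℝ} (hs : s ≠ 0)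
    (u v : ℝ) : ∫ x in u * s..v * s, s * f (x / s) = s ^ 2 * ∫ z in u..v, f z := by
  rw [intervalIntegral.integral_const_mul, intervalIntegral.integral_comp_div f hs,
    mul_div_cancel_right₀ u hs, mul_div_cancel_right₀ v hs, smul_eq_mul]
  ring

theorem intervalIntegral.integral_mul_deriv_sub_self {ψ : ℝ → ℝ} (hψ : ContDiff ℝ 1 ψ)
    (u v : ℝ) :
    ∫ z in u..v, (z * deriv ψ z - ψ z) = v * ψ v - u * ψ u - 2 * ∫ z in u..v, ψ z := by
  have hψ' : ∀ x, HasDerivAt ψ (deriv ψ x) x :=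
    fun x ↦ (hψ.differentiable one_ne_zero x).hasDerivAt
  have hdψ : Continuous (deriv ψ) := hψ.continuous_deriv le_rfl
  have hmul : Continuous fun z ↦ z * deriv ψ z := continuous_id.mul hdψ
  have hparts := intervalIntegral.integral_mul_deriv_eq_deriv_mul
    (fun x _ ↦ hasDerivAt_id x) (fun x _ ↦ hψ' x) intervalIntegrable_const
    (hdψ.intervalIntegrable u v)
  simp only [id, one_mul] at hparts
  rw [intervalIntegral.integral_sub (hmul.intervalIntegrable u v)
    (hψ.continuous.intervalIntegrable u v), hparts]
  ring

theorem integral_comp_deriv_eq_of_profile_ode {a ψ : ℝ → ℝ} (ha : Continuous a)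
    (hψ : ContDiff ℝ 2 ψ) {u v : ℝ} (huv : u ≤ v)
    (hode : ∀ z ∈ Icc u v, a (deriv ψ z) * deriv (deriv ψ) z = z * deriv ψ z - ψ z) :
    ∫ p in deriv ψ u..deriv ψ v, a p = v * ψ v - u * ψ u - 2 * ∫ z in u..v, ψ z := by
  have hψ1 : ContDiff ℝ 1 (deriv ψ) := hψ.iterate_deriv' 1 1
  have hsubst := intervalIntegral.integral_deriv_smul_comp (a := u) (b := v)
    (fun x _ ↦ (hψ1.differentiable one_ne_zero x).hasDerivAt)
    (hψ1.continuous_deriv le_rfl).continuousOn ha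
  rw [← hsubst, ← intervalIntegral.integral_mul_deriv_sub_self (hψ.of_le one_le_two)]
  refine intervalIntegral.integral_congr fun z hz ↦ ?_
  rw [uIcc_of_le huv] at hz
  rw [smul_eq_mul, Function.comp_apply, mul_comm, hode z hz]

theorem stmt_12_general (a ψ : ℝ → ℝ) (T q₁ q₂ β γ₁ γ₂ : ℝ)
    (ha : Continuous a)
    (hq₁ : 0 < q₁) (hq₂ : 0 < q₂)
    (hψ : ContDiff ℝ 2 ψ)
    (hode : ∀ z ∈ Set.Icc (-q₁) q₂,
      a (deriv ψ z) * deriv (deriv ψ) z = z * deriv ψ z - ψ z)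
    (hbc1 : deriv ψ (-q₁) = -γ₁) (hbc2 : ψ (-q₁) = q₁ * tan β)
    (hbc3 : deriv ψ q₂ = γ₂) (hbc4 : ψ q₂ = q₂ * tan β)
    (D : ℝ → ℝ)
    (hD : ∀ t, D t =
      (∫ x in (-(q₁ * Real.sqrt (2 * (T - t))))..(q₂ * Real.sqrt (2 * (T - t))),
        Real.sqrt (2 * (T - t)) * ψ (x / Real.sqrt (2 * (T - t)))) -
      (1 / 2) * ((q₁ * Real.sqrt (2 * (T - t))) ^ 2 +
        (q₂ * Real.sqrt (2 * (T - t))) ^ 2) * tan β) :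
    ∀ t, 0 ≤ t → t < T → deriv D t = ∫ p in (-γ₁)..γ₂, a p := by
  intro t _ htT
  set C := (∫ z in (-q₁)..q₂, ψ z) - (1 / 2) * (q₁ ^ 2 + q₂ ^ 2) * tan β
  have hD_linear : ∀ t' < T, D t' = 2 * (T - t') * C := by
    intro t' ht'
    have hs : 0 < 2 * (T - t') := by linarith
    rw [hD t', ← neg_mul, intervalIntegral.integral_const_mul_comp_div
      (sqrt_pos.2 hs).ne', mul_pow, mul_pow, sq_sqrt hs.le]
    ring
  have hflux : ∫ p in (-γ₁)..γ₂, a p = -2 * C := by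
    rw [← hbc1, ← hbc3, integral_comp_deriv_eq_of_profile_ode ha hψ (by linarith) hode,
      hbc2, hbc4]
    ring
  have hderiv : HasDerivAt D (-2 * C) t := by
    have hlin : HasDerivAt (fun t' ↦ 2 * (T - t') * C) (-2 * C) t := by
      simpa using ((hasDerivAt_id t).const_sub T).const_mul 2 |>.mul_const C
    exact hlin.congr_of_eventuallyEq (eventually_lt_nhds htT |>.mono hD_linear)
  rw [hderiv.deriv, hflux]

theorem stmt_12 (a ψ : ℝ → ℝ) (T q₁ q₂ β γ₁ γ₂ : ℝ)
    (ha : Continuous a) (hapos : ∀ p, 0 < a p)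
    (hT : 0 < T) (hq₁ : 0 < q₁) (hq₂ : 0 < q₂) (hβ : β ∈ Set.Ioo 0 (π / 2))
    (hγ : γ₁ + γ₂ < 0)
    (hψ : ContDiff ℝ 2 ψ)
    (hode : ∀ z ∈ Set.Icc (-q₁) q₂,
      a (deriv ψ z) * deriv (deriv ψ) z = z * deriv ψ z - ψ z)
    (hbc1 : deriv ψ (-q₁) = -γ₁) (hbc2 : ψ (-q₁) = q₁ * tan β)
    (hbc3 : deriv ψ q₂ = γ₂) (hbc4 : ψ q₂ = q₂ * tan β)
    (D : ℝ → ℝ)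
    (hD : ∀ t, D t =
      (∫ x in (-(q₁ * Real.sqrt (2 * (T - t))))..(q₂ * Real.sqrt (2 * (T - t))),
        Real.sqrt (2 * (T - t)) * ψ (x / Real.sqrt (2 * (T - t)))) -
      (1 / 2) * ((q₁ * Real.sqrt (2 * (T - t))) ^ 2 +
        (q₂ * Real.sqrt (2 * (T - t))) ^ 2) * tan β) :
    ∀ t, 0 ≤ t → t < T → deriv D t = ∫ p in (-γ₁)..γ₂, a p :=
  stmt_12_general a ψ T q₁ q₂ β γ₁ γ₂ ha hq₁ hq₂ hψ hode hbc1 hbc2 hbc3 hbc4 D hD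
end

section
/- Suppose b > 1, U is strictly increasing in t (U_t > 0), both U and U* satisfy the discrete self-similarity b⁻¹V(bx, b²t) = V(x,t), and the comparison property holds: if U*(·, t₁) ≤ U(·, t₂) pointwise with touching (denoted ⪯) and not identically equal, then U*(·, t₁ + τ) < U(·, t₂ + τ) for all τ > 0. If U*(x̄, t̄) = U(x̄, t̄) at some point with U*(·, t̄) ≢ U(·, t̄), and t̃ := inf{t : U*(·, t̄) < U(·, t)} satisfies t̃ ≥ t̄ and U*(·, t̄) ⪯ U(·, t̃), then the self-similarity gives U*(·, b²t̄) ⪯ U(·, b²t̃) while comparison gives U*(·, b²t̄) < U(·, t̃ + (b²−1)t̄), forcing b²t̃ < t̃ + (b²−1)t̄, i.e. t̃ < t̄ — a contradiction. Hence the expanding self-similar solution is unique. -/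
/-!
Touching is invariant under the parabolic scaling `(x, t) ↦ (b x, b² t)`: if `U*(·, t̄)` touches
`U(·, t̃)` at `x̄`, then `U*(·, b² t̄)` touches `U(·, b² t̃)` at `b x̄`. Comparison run for the time
`(b² - 1) t̄` instead makes `U*(·, b² t̄)` lie strictly below `U(·, t̃ + (b² - 1) t̄)`, and for
`t̃ ≥ t̄` this time is at most `b² t̃`, so by monotonicity in time strictly below `U(·, b² t̃)`.
-/

def SelfSimilar (b : ℝ) (V : ℝ → ℝ → ℝ) : Prop :=
  ∀ x t, 0 < t → b⁻¹ * V (b * x) (b ^ 2 * t) = V x t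

theorem SelfSimilar.apply_mul {b : ℝ} {V : ℝ → ℝ → ℝ} (hV : SelfSimilar b V) (hb : b ≠ 0)
    (x : ℝ) {t : ℝ} (ht : 0 < t) : V (b * x) (b ^ 2 * t) = b * V x t := by
  rw [← hV x t ht, mul_inv_cancel_left₀ hb]

theorem SelfSimilar.touch_scale {b : ℝ} {U V : ℝ → ℝ → ℝ} (hU : SelfSimilar b U)
    (hV : SelfSimilar b V) (hb : b ≠ 0) {x t₁ t₂ : ℝ} (ht₁ : 0 < t₁) (ht₂ : 0 < t₂)
    (h : V x t₁ = U x t₂) : V (b * x) (b ^ 2 * t₁) = U (b * x) (b ^ 2 * t₂) := by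
  rw [hV.apply_mul hb x ht₁, hU.apply_mul hb x ht₂, h]

theorem monotoneOn_Ioi_of_lt {U : ℝ → ℝ → ℝ}
    (hmono : ∀ x t₁ t₂, 0 < t₁ → t₁ < t₂ → U x t₁ < U x t₂) (x : ℝ) :
    MonotoneOn (U x) (Set.Ioi 0) :=
  StrictMonoOn.monotoneOn fun _ ht₁ _ _ h => hmono x _ _ ht₁ h

theorem add_sub_one_mul_le_sq_mul {b t₁ t₂ : ℝ} (hb : 1 ≤ b) (h : t₁ ≤ t₂) :
    t₂ + (b ^ 2 - 1) * t₁ ≤ b ^ 2 * t₂ := by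
  have := mul_le_mul_of_nonneg_left h (sub_nonneg.2 (one_le_pow₀ hb : 1 ≤ b ^ 2))
  linarith

theorem stmt_17 (U Us : ℝ → ℝ → ℝ) (b tb tt : ℝ) (hb : 1 < b)
    (hmono : ∀ x t₁ t₂, 0 < t₁ → t₁ < t₂ → U x t₁ < U x t₂)
    (hssU : ∀ x t, 0 < t → b⁻¹ * U (b * x) (b ^ 2 * t) = U x t)
    (hssUs : ∀ x t, 0 < t → b⁻¹ * Us (b * x) (b ^ 2 * t) = Us x t)
    (hcomp : ∀ t₁ t₂, 0 < t₁ → 0 < t₂ →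
      (∀ x, Us x t₁ ≤ U x t₂) → ¬(∀ x, Us x t₁ = U x t₂) →
      ∀ τ, 0 < τ → ∀ x, Us x (t₁ + τ) < U x (t₂ + τ))
    (htb : 0 < tb) (htt : tb ≤ tt)
    (hle : ∀ x, Us x tb ≤ U x tt)
    (htouch : ∃ x, Us x tb = U x tt)
    (hnid : ¬(∀ x, Us x tb = U x tt)) :
    False := by
  obtain ⟨x₀, hx₀⟩ := htouch
  have htt₀ : 0 < tt := htb.trans_le htt
  have hτ : 0 < (b ^ 2 - 1) * tb := mul_pos (by nlinarith) htb
  have hstrict := hcomp tb tt htb htt₀ hle hnid _ hτ (b * x₀)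
  rw [show tb + (b ^ 2 - 1) * tb = b ^ 2 * tb by ring] at hstrict
  have hlater : U (b * x₀) (tt + (b ^ 2 - 1) * tb) ≤ U (b * x₀) (b ^ 2 * tt) :=
    monotoneOn_Ioi_of_lt hmono (b * x₀) (show 0 < tt + (b ^ 2 - 1) * tb by linarith)
      (show 0 < b ^ 2 * tt by positivity) (add_sub_one_mul_le_sq_mul hb.le htt)
  have htouch' : Us (b * x₀) (b ^ 2 * tb) = U (b * x₀) (b ^ 2 * tt) :=
    SelfSimilar.touch_scale hssU hssUs (by positivity) htb htt₀ hx₀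
  exact (hstrict.trans_le hlater).ne htouch'
end
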